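/- Consider an instance (in which every good is positively valued by at least one agent and every good an agent regards as divisible is positively valued by that agent) such that every good is regarded as divisible by at most one agent. Then there exists an integral complete allocation (each good allocated wholly to a single agent) that is both EF1M and non-wasteful. -/
import Mathlib


open scoped BigOperators Classical

/-- An instance of fair division with subjective divisibility: `n` agents and `m` goods,
each good of total amount 1.  Each agent `i` assigns a nonnegative value `v i g` to each
good `g` and regards each good as either divisible or indivisible for her. -/
structure FairDivision (n m : ℕ) where
  /-- agent `i`'s value for good `g` -/
  v : Fin n → Fin m → ℝ
  v_nonneg : ∀ i g, 0 ≤ v i g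
  /-- `divisible i g` means agent `i` regards good `g` as divisible -/
  divisible : Fin n → Fin m → Prop

namespace FairDivision

variable {n m : ℕ}

/-- Agent `i`'s utility from receiving fraction `t ∈ [0,1]` of good `g`:
`t * v i g` if `g` is divisible for `i`; `v i g` if `g` is indivisible for `i` and `t = 1`;
and `0` if `g` is indivisible for `i` and `t < 1`. -/
noncomputable def frUtil (I : FairDivision n m) (i : Fin n) (g : Fin m) (t : ℝ) : ℝ :=
  if I.divisible i g then t * I.v i g else if t = 1 then I.v i g else 0

/-- Agent `i`'s (additive) utility for a bundle `b`, given by the fraction `b g` of each good. -/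
noncomputable def util (I : FairDivision n m) (i : Fin n) (b : Fin m → ℝ) : ℝ :=
  ∑ g, I.frUtil i g (b g)

/-- Agent `i`'s utility for the bundle `b` with good `g` omitted. -/
noncomputable def utilMinus (I : FairDivision n m) (i : Fin n) (b : Fin m → ℝ) (g : Fin m) : ℝ :=
  ∑ g' ∈ Finset.univ.erase g, I.frUtil i g' (b g')

/-- A complete allocation: fractions in `[0,1]` summing to `1` for every good. -/
def IsAllocation (I : FairDivision n m) (x : Fin n → Fin m → ℝ) : Prop :=
  (∀ i g, 0 ≤ x i g ∧ x i g ≤ 1) ∧ ∀ g, ∑ i, x i g = 1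

/-- A partial allocation: fractions in `[0,1]` summing to at most `1` for every good. -/
def IsPartialAllocation (I : FairDivision n m) (x : Fin n → Fin m → ℝ) : Prop :=
  (∀ i g, 0 ≤ x i g ∧ x i g ≤ 1) ∧ ∀ g, ∑ i, x i g ≤ 1

/-- The maximin share of agent `i`: the supremum, over all fractional `n`-partitions
`P` of the goods, of the minimum over the parts `P j` of agent `i`'s utility. -/
noncomputable def MMS (I : FairDivision n m) (i : Fin n) : ℝ :=
  sSup { r : ℝ | ∃ P : Fin n → Fin m → ℝ, I.IsAllocation P ∧ r = ⨅ j, I.util i (P j) }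

/-- Non-wastefulness: every positive fraction an agent receives yields her positive utility. -/
def NonWasteful (I : FairDivision n m) (x : Fin n → Fin m → ℝ) : Prop :=
  ∀ i g, 0 < x i g → 0 < I.frUtil i g (x i g)

/-- Envy-freeness. -/
def EF (I : FairDivision n m) (x : Fin n → Fin m → ℝ) : Prop :=
  ∀ i j, I.util i (x j) ≤ I.util i (x i)

/-- Envy-freeness for mixed goods: for all agents `i, j`, if every good `j` receives a
positive fraction of is indivisible for `i`, then `i` does not envy `j` after removing some
such good from `j`'s bundle; otherwise `i` does not envy `j`. -/
def EFM (I : FairDivision n m) (x : Fin n → Fin m → ℝ) : Prop :=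
  ∀ i j,
    ((∀ g, 0 < x j g → ¬ I.divisible i g) →
      ∃ g, 0 < x j g ∧ I.utilMinus i (x j) g ≤ I.util i (x i)) ∧
    ((¬ ∀ g, 0 < x j g → ¬ I.divisible i g) → I.util i (x j) ≤ I.util i (x i))

/-- EFXM: as EFM, but the envy must vanish after removing any positively valued such good. -/
def EFXM (I : FairDivision n m) (x : Fin n → Fin m → ℝ) : Prop :=
  ∀ i j,
    ((∀ g, 0 < x j g → ¬ I.divisible i g) →
      ∀ g, 0 < x j g → 0 < I.v i g → I.utilMinus i (x j) g ≤ I.util i (x i)) ∧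
    ((¬ ∀ g, 0 < x j g → ¬ I.divisible i g) → I.util i (x j) ≤ I.util i (x i))

/-- EF1M: if `j`'s bundle contains (a positive fraction of) some good that `i` regards as
indivisible and values positively, the envy of `i` must vanish after removing some such good;
otherwise `i` does not envy `j`. -/
def EF1M (I : FairDivision n m) (x : Fin n → Fin m → ℝ) : Prop :=
  ∀ i j,
    ((∃ g, 0 < x j g ∧ ¬ I.divisible i g ∧ 0 < I.v i g) →
      ∃ g, 0 < x j g ∧ ¬ I.divisible i g ∧ 0 < I.v i g ∧
        I.utilMinus i (x j) g ≤ I.util i (x i)) ∧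
    ((¬ ∃ g, 0 < x j g ∧ ¬ I.divisible i g ∧ 0 < I.v i g) → I.util i (x j) ≤ I.util i (x i))

/-- Pareto optimality (among complete allocations). -/
def ParetoOptimal (I : FairDivision n m) (x : Fin n → Fin m → ℝ) : Prop :=
  ¬ ∃ y, I.IsAllocation y ∧ (∀ i, I.util i (x i) ≤ I.util i (y i)) ∧
    ∃ i, I.util i (x i) < I.util i (y i)

/-- In a 3-agent instance, `B` (a set of whole goods) is a reducible bundle with respect to
agent `i`: `u_i(B) ≥ (2/3)·MMS_i`, `u_j(M∖B) ≥ 2·MMS_j` for some agent `j ≠ i`, and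
`u_k(M∖B) ≥ (4/3)·MMS_k` for the remaining agent `k`. -/
def IsReducible (I : FairDivision 3 m) (B : Finset (Fin m)) (i : Fin 3) : Prop :=
  2 / 3 * I.MMS i ≤ ∑ g ∈ B, I.v i g ∧
    ∃ j, j ≠ i ∧ 2 * I.MMS j ≤ ∑ g ∈ Bᶜ, I.v j g ∧
      ∀ k, k ≠ i → k ≠ j → 4 / 3 * I.MMS k ≤ ∑ g ∈ Bᶜ, I.v k g

end FairDivision

namespace FairDivision

variable {n m : ℕ}

/-- One "round" of the adaptive picking procedure: each agent in `A` either picks a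
good from `R` that is maximal for her (and positive), or passes (only possible when
all remaining goods are worthless to her), in such a way that picked goods are distinct
and for every pair `i ≠ j` (both in `A`), if `j` picked `gj` then either `i` picked
something at least as valuable to `i`, or `gj` is indivisible for `i`, or worthless to `i`. -/
lemma round_exists (I : FairDivision n m)
    (honediv : ∀ g (i i' : Fin n), I.divisible i g → I.divisible i' g → i = i')
    (A : Finset (Fin n)) (R : Finset (Fin m)) :
    ∃ π : Fin n → Option (Fin m),
      (∀ i, i ∉ A → π i = none) ∧
      (∀ i g, π i = some g → g ∈ R ∧ 0 < I.v i g) ∧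
      (∀ i i' g, π i = some g → π i' = some g → i = i') ∧
      (∀ i, i ∈ A → ∀ h ∈ R, (∀ k, π k ≠ some h) →
        (∀ g, π i = some g → I.v i h ≤ I.v i g) ∧ (π i = none → I.v i h = 0)) ∧
      (∀ i, i ∈ A → ∀ j, j ∈ A → i ≠ j → ∀ gj, π j = some gj →
        (∃ gi, π i = some gi ∧ I.v i gj ≤ I.v i gi) ∨ ¬ I.divisible i gj ∨ I.v i gj = 0) ∧
      ((∃ g ∈ R, ∃ i ∈ A, 0 < I.v i g) → ∃ i g, π i = some g) := by
  induction A using Finset.strongInductionOn generalizing R with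
  | _ A ih =>
  rcases A.eq_empty_or_nonempty with rfl | hAne
  · refine ⟨fun _ => none, fun _ _ => rfl, by simp, by simp, by simp, by simp, ?_⟩
    rintro ⟨g, _, i, hi, _⟩; simp at hi
  by_cases hzero : ∃ i ∈ A, ∀ h ∈ R, I.v i h ≤ 0
  · -- some agent passes
    obtain ⟨i₀, hi₀A, hi₀⟩ := hzero
    obtain ⟨π, p1, p2, p3, p4, p5, p6⟩ :=
      ih (A.erase i₀) (Finset.erase_ssubset hi₀A) R
    have hπi₀ : π i₀ = none := p1 i₀ (by simp)
    refine ⟨π, ?_, p2, p3, ?_, ?_, ?_⟩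
    · intro i hi; exact p1 i (fun hmem => hi (Finset.mem_of_mem_erase hmem))
    · intro i hiA h hhR hunp
      by_cases hii0 : i = i₀
      · subst hii0
        refine ⟨fun g hg => absurd hg (by simp [hπi₀]), fun _ =>
          le_antisymm (hi₀ h hhR) (I.v_nonneg i h)⟩
      · exact p4 i (Finset.mem_erase.2 ⟨hii0, hiA⟩) h hhR hunp
    · intro i hiA j hjA hij gj hπj
      by_cases hjj0 : j = i₀
      · subst hjj0; rw [hπi₀] at hπj; exact absurd hπj (by simp)
      by_cases hii0 : i = i₀
      · subst hii0
        exact Or.inr (Or.inr (le_antisymm (hi₀ gj (p2 j gj hπj).1) (I.v_nonneg i gj)))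
      · exact p5 i (Finset.mem_erase.2 ⟨hii0, hiA⟩) j (Finset.mem_erase.2 ⟨hjj0, hjA⟩) hij gj hπj
    · rintro ⟨g, hgR, i, hiA, hposg⟩
      have hii0 : i ≠ i₀ := by
        rintro rfl; exact absurd (hi₀ g hgR) (not_le.2 hposg)
      exact p6 ⟨g, hgR, i, Finset.mem_erase.2 ⟨hii0, hiA⟩, hposg⟩
  · -- every agent in A has a positively-valued good in R
    push_neg at hzero
    have hRne : R.Nonempty := by
      obtain ⟨a₀, ha₀⟩ := hAne
      obtain ⟨h₀, hh₀, _⟩ := hzero a₀ ha₀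
      exact ⟨h₀, hh₀⟩
    have hfe : ∀ i : Fin n, ∃ b, b ∈ R ∧ ∀ h ∈ R, I.v i h ≤ I.v i b := by
      intro i
      obtain ⟨b, hb, hmax⟩ := R.exists_max_image (I.v i) hRne
      exact ⟨b, hb, hmax⟩
    choose fav hfavR hfavmax using hfe
    have hfavpos : ∀ i ∈ A, 0 < I.v i (fav i) := by
      intro i hi
      obtain ⟨h, hhR, hhv⟩ := hzero i hi
      exact lt_of_lt_of_le hhv (hfavmax i h hhR)
    -- key construction from a "batch" C
    have key : ∀ C : Finset (Fin n), C ⊆ A → C.Nonempty → Set.InjOn fav C →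
        (∀ j ∈ C, ∀ i ∈ A, i ∉ C → ¬ I.divisible i (fav j)) →
        ∃ π : Fin n → Option (Fin m),
          (∀ i, i ∉ A → π i = none) ∧
          (∀ i g, π i = some g → g ∈ R ∧ 0 < I.v i g) ∧
          (∀ i i' g, π i = some g → π i' = some g → i = i') ∧
          (∀ i, i ∈ A → ∀ h ∈ R, (∀ k, π k ≠ some h) →
            (∀ g, π i = some g → I.v i h ≤ I.v i g) ∧ (π i = none → I.v i h = 0)) ∧
          (∀ i, i ∈ A → ∀ j, j ∈ A → i ≠ j → ∀ gj, π j = some gj →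
            (∃ gi, π i = some gi ∧ I.v i gj ≤ I.v i gi) ∨ ¬ I.divisible i gj ∨ I.v i gj = 0) ∧
          ((∃ g ∈ R, ∃ i ∈ A, 0 < I.v i g) → ∃ i g, π i = some g) := by
      intro C hCA hCne hCinj hCnd
      have hssub : A \ C ⊂ A := by
        obtain ⟨c₀, hc₀⟩ := hCne
        refine Finset.ssubset_iff_of_subset (Finset.sdiff_subset) |>.2 ⟨c₀, hCA hc₀, by simp [hc₀]⟩
      obtain ⟨π, p1, p2, p3, p4, p5, _⟩ := ih (A \ C) hssub (R \ C.image fav)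
      have hπC : ∀ i ∈ C, π i = none := fun i hi => p1 i (by simp [hi])
      set π' : Fin n → Option (Fin m) := fun i => if i ∈ C then some (fav i) else π i with hπ'set
      have hπ'def : ∀ i, π' i = if i ∈ C then some (fav i) else π i := fun i => rfl
      refine ⟨π', ?_, ?_, ?_, ?_, ?_, ?_⟩
      · intro i hi
        have hiC : i ∉ C := fun h => hi (hCA h)
        rw [hπ'def i, if_neg hiC]
        exact p1 i (by simp [hi])
      · intro i g hg
        rw [hπ'def i] at hg
        by_cases hiC : i ∈ C
        · rw [if_pos hiC] at hg
          obtain rfl : fav i = g := Option.some.inj hg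
          exact ⟨hfavR i, hfavpos i (hCA hiC)⟩
        · rw [if_neg hiC] at hg
          exact ⟨(Finset.mem_sdiff.1 (p2 i g hg).1).1, (p2 i g hg).2⟩
      · intro i i' g hgi hgi'
        rw [hπ'def i] at hgi; rw [hπ'def i'] at hgi'
        by_cases hiC : i ∈ C <;> by_cases hi'C : i' ∈ C
        · rw [if_pos hiC] at hgi; rw [if_pos hi'C] at hgi'
          have e1 : fav i = g := Option.some.inj hgi
          have e2 : fav i' = g := Option.some.inj hgi'
          exact hCinj hiC hi'C (e1.trans e2.symm)
        · rw [if_pos hiC] at hgi; rw [if_neg hi'C] at hgi'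
          have e1 : fav i = g := Option.some.inj hgi
          have := (Finset.mem_sdiff.1 (p2 i' g hgi').1).2
          exact absurd (Finset.mem_image.2 ⟨i, hiC, e1⟩) this
        · rw [if_neg hiC] at hgi; rw [if_pos hi'C] at hgi'
          have e1 : fav i' = g := Option.some.inj hgi'
          have := (Finset.mem_sdiff.1 (p2 i g hgi).1).2
          exact absurd (Finset.mem_image.2 ⟨i', hi'C, e1⟩) this
        · rw [if_neg hiC] at hgi; rw [if_neg hi'C] at hgi'
          exact p3 i i' g hgi hgi'
      · intro i hiA h hhR hunp
        by_cases hiC : i ∈ C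
        · rw [hπ'def i, if_pos hiC]
          refine ⟨fun g hg => ?_, fun hg => by simp at hg⟩
          obtain rfl : fav i = g := Option.some.inj hg
          exact hfavmax i h hhR
        · rw [hπ'def i, if_neg hiC]
          refine p4 i (Finset.mem_sdiff.2 ⟨hiA, hiC⟩) h ?_ ?_
          · refine Finset.mem_sdiff.2 ⟨hhR, fun hmem => ?_⟩
            obtain ⟨j, hjC, hje⟩ := Finset.mem_image.1 hmem
            exact hunp j (by rw [hπ'def j, if_pos hjC, hje])
          · intro k
            have hk := hunp k
            rw [hπ'def k] at hk
            by_cases hkC : k ∈ C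
            · rw [hπC k hkC]; simp
            · rwa [if_neg hkC] at hk
      · intro i hiA j hjA hij gj hπj
        rw [hπ'def j] at hπj
        by_cases hjC : j ∈ C
        · rw [if_pos hjC] at hπj
          obtain rfl : fav j = gj := Option.some.inj hπj
          by_cases hiC : i ∈ C
          · exact Or.inl ⟨fav i, by rw [hπ'def i, if_pos hiC], hfavmax i (fav j) (hfavR j)⟩
          · exact Or.inr (Or.inl (hCnd j hjC i hiA hiC))
        · rw [if_neg hjC] at hπj
          have hgjR : gj ∈ R := (Finset.mem_sdiff.1 (p2 j gj hπj).1).1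
          by_cases hiC : i ∈ C
          · exact Or.inl ⟨fav i, by rw [hπ'def i, if_pos hiC], hfavmax i gj hgjR⟩
          · have := p5 i (Finset.mem_sdiff.2 ⟨hiA, hiC⟩) j (Finset.mem_sdiff.2 ⟨hjA, hjC⟩) hij gj hπj
            rcases this with ⟨gi, hgi, hle⟩ | h | h
            · exact Or.inl ⟨gi, by rw [hπ'def i, if_neg hiC]; exact hgi, hle⟩
            · exact Or.inr (Or.inl h)
            · exact Or.inr (Or.inr h)
      · intro _
        obtain ⟨c₀, hc₀⟩ := hCne
        exact ⟨c₀, fav c₀, by rw [hπ'def c₀, if_pos hc₀]⟩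
    by_cases helig : ∃ j ∈ A, ∀ d ∈ A, d ≠ j → ¬ I.divisible d (fav j)
    · obtain ⟨j₀, hj₀A, hj₀⟩ := helig
      refine key {j₀} (Finset.singleton_subset_iff.2 hj₀A) ⟨j₀, Finset.mem_singleton_self j₀⟩
        ?_ ?_
      · intro x hx y hy _
        simp only [Finset.coe_singleton, Set.mem_singleton_iff] at hx hy
        rw [hx, hy]
      · intro j hj i hiA hiC
        rw [Finset.mem_singleton] at hj; subst hj
        exact hj₀ i hiA (by simpa using hiC)
    · push_neg at helig
      -- every agent's favorite is divisible for some other agent in A: find a cycle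
      have hσe : ∀ j : Fin n, ∃ d, j ∈ A → (d ∈ A ∧ d ≠ j ∧ I.divisible d (fav j)) := by
        intro j
        by_cases hj : j ∈ A
        · obtain ⟨d, hdA, hdne, hddiv⟩ := helig j hj
          exact ⟨d, fun _ => ⟨hdA, hdne, hddiv⟩⟩
        · exact ⟨j, fun h => absurd h hj⟩
      choose σ hσ using hσe
      have hAinv : ∀ j ∈ A, σ j ∈ A := fun j hj => (hσ j hj).1
      have hmem𝒞 : A ∈ A.powerset.filter (fun C => C.Nonempty ∧ ∀ j ∈ C, σ j ∈ C) := by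
        refine Finset.mem_filter.2 ⟨Finset.mem_powerset_self A, hAne, hAinv⟩
      obtain ⟨C, hC𝒞, hCmin⟩ := Finset.exists_min_image _ Finset.card ⟨A, hmem𝒞⟩
      rw [Finset.mem_filter, Finset.mem_powerset] at hC𝒞
      obtain ⟨hCA, hCne, hCinv⟩ := hC𝒞
      have hDinC : C.image σ ⊆ C := Finset.image_subset_iff.2 hCinv
      have hD𝒞 : C.image σ ∈ A.powerset.filter (fun C => C.Nonempty ∧ ∀ j ∈ C, σ j ∈ C) := by
        refine Finset.mem_filter.2 ⟨Finset.mem_powerset.2 (hDinC.trans hCA), hCne.image σ, ?_⟩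
        intro j hj
        obtain ⟨b, hbC, rfl⟩ := Finset.mem_image.1 hj
        exact Finset.mem_image.2 ⟨σ b, hCinv b hbC, rfl⟩
      have hDC : C.image σ = C :=
        Finset.eq_of_subset_of_card_le hDinC (hCmin _ hD𝒞)
      have hσinj : Set.InjOn σ C := Finset.injOn_of_card_image_eq (by rw [hDC])
      have hfavinj : Set.InjOn fav C := by
        intro x hx y hy hxy
        have hx' : x ∈ C := hx
        have hy' : y ∈ C := hy
        have d1 := (hσ x (hCA hx')).2.2
        have d2 := (hσ y (hCA hy')).2.2
        rw [hxy] at d1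
        exact hσinj hx hy (honediv (fav y) (σ x) (σ y) d1 d2)
      refine key C hCA hCne hfavinj ?_
      intro j hjC i hiA hiC hdvi
      have d2 := (hσ j (hCA hjC)).2.2
      have : i = σ j := honediv (fav j) i (σ j) hdvi d2
      exact hiC (this ▸ hCinv j hjC)

/-- Core combinatorial allocation lemma. -/
lemma core (I : FairDivision n m)
    (hpos : ∀ g, ∃ i, 0 < I.v i g)
    (honediv : ∀ g (i i' : Fin n), I.divisible i g → I.divisible i' g → i = i')
    (R : Finset (Fin m)) :
    ∀ X : Fin n → Finset (Fin m),
    (∀ i j g, g ∈ X i → g ∈ X j → i = j) →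
    (∀ g, g ∉ R → ∃ i, g ∈ X i) →
    (∀ i g, g ∈ X i → g ∉ R) →
    (∀ i g, g ∈ X i → 0 < I.v i g) →
    (∀ i j, i ≠ j → ∃ ω c : ℝ, 0 ≤ c ∧
       (∑ g ∈ X j, I.v i g) + c ≤ (∑ g ∈ X i, I.v i g) + ω ∧
       ((ω = 0 ∧ c = 0) ∨ ∃ gs, gs ∈ X j ∧ ¬ I.divisible i gs ∧ 0 < I.v i gs ∧
          ω = I.v i gs ∧ ∀ h ∈ R, I.v i h ≤ c)) →
    ∃ Y : Fin n → Finset (Fin m),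
      (∀ g, ∃! i, g ∈ Y i) ∧ (∀ i g, g ∈ Y i → 0 < I.v i g) ∧
      ∀ i j, i ≠ j →
        (∑ g ∈ Y j, I.v i g) ≤ (∑ g ∈ Y i, I.v i g) ∨
        ∃ gs, gs ∈ Y j ∧ ¬ I.divisible i gs ∧ 0 < I.v i gs ∧
          (∑ g ∈ Y j, I.v i g) - I.v i gs ≤ (∑ g ∈ Y i, I.v i g) := by
  induction R using Finset.strongInductionOn with
  | _ R ih =>
  intro X disj cover notR nw inv
  rcases R.eq_empty_or_nonempty with rfl | hRne
  · refine ⟨X, fun g => ?_, nw, fun i j hij => ?_⟩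
    · obtain ⟨i, hi⟩ := cover g (by simp)
      exact ⟨i, hi, fun k hk => disj k i g hk hi⟩
    · obtain ⟨ω, c, hc, hsum, hcase⟩ := inv i j hij
      rcases hcase with ⟨hω, hc0⟩ | ⟨gs, hgs, hnd, hp, hωeq, _⟩
      · exact Or.inl (by rw [hω, hc0] at hsum; linarith)
      · exact Or.inr ⟨gs, hgs, hnd, hp, by rw [hωeq] at hsum; linarith⟩
  · obtain ⟨π, p1, p2, p3, p4, p5, p6⟩ := I.round_exists honediv Finset.univ R
    obtain ⟨g₀, hg₀R⟩ := hRne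
    obtain ⟨i₀, hi₀⟩ := hpos g₀
    obtain ⟨i₁, g₁, hi₁⟩ := p6 ⟨g₀, hg₀R, i₀, Finset.mem_univ i₀, hi₀⟩
    set R' : Finset (Fin m) := R.filter (fun h => ∀ k, π k ≠ some h) with hR'
    have hR'ss : R' ⊂ R := by
      refine (Finset.ssubset_iff_of_subset (Finset.filter_subset _ _)).2
        ⟨g₁, (p2 i₁ g₁ hi₁).1, fun hmem => (Finset.mem_filter.1 hmem).2 i₁ hi₁⟩
    have hR'sub : R' ⊆ R := Finset.filter_subset _ _
    set X' : Fin n → Finset (Fin m) := fun i => X i ∪ (π i).toFinset with hX'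
    have hmemX' : ∀ i g, g ∈ X' i ↔ g ∈ X i ∨ π i = some g := by
      intro i g
      simp [hX', Option.mem_toFinset, Option.mem_def]
    -- value to i of j's pick
    set W : Fin n → Fin n → ℝ :=
      fun i j => match π j with | some g => I.v i g | none => 0 with hWdef
    have hWsome : ∀ i j g, π j = some g → W i j = I.v i g := by
      intro i j g hg; simp [hWdef, hg]
    have hWnone : ∀ i j, π j = none → W i j = 0 := by
      intro i j hg; simp [hWdef, hg]
    have hWnonneg : ∀ i j, 0 ≤ W i j := by
      intro i j
      rcases hg : π j with _ | g
      · rw [hWnone i j hg]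
      · rw [hWsome i j g hg]; exact I.v_nonneg i g
    -- sums over X'
    have hsumX' : ∀ i j : Fin n, (∑ g ∈ X' j, I.v i g) =
        (∑ g ∈ X j, I.v i g) + W i j := by
      intro i j
      rcases hπj : π j with _ | gj
      · rw [hWnone i j hπj]
        simp [hX', hπj]
      · rw [hWsome i j gj hπj]
        have hnm : gj ∉ X j := fun hmem => notR j gj hmem (p2 j gj hπj).1
        have : X' j = insert gj (X j) := by
          ext a; simp [hmemX', hπj, Finset.mem_insert, or_comm, eq_comm (a := a)]
        rw [this, Finset.sum_insert hnm]
        ring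
    have disj' : ∀ i j g, g ∈ X' i → g ∈ X' j → i = j := by
      intro i j g hgi hgj
      rcases (hmemX' i g).1 hgi with h1 | h1 <;> rcases (hmemX' j g).1 hgj with h2 | h2
      · exact disj i j g h1 h2
      · exact absurd (p2 j g h2).1 (notR i g h1)
      · exact absurd (p2 i g h1).1 (notR j g h2)
      · exact p3 i j g h1 h2
    have cover' : ∀ g, g ∉ R' → ∃ i, g ∈ X' i := by
      intro g hg
      by_cases hgR : g ∈ R
      · have : ¬ ∀ k, π k ≠ some g := fun hall => hg (Finset.mem_filter.2 ⟨hgR, hall⟩)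
        push_neg at this
        obtain ⟨k, hk⟩ := this
        exact ⟨k, (hmemX' k g).2 (Or.inr hk)⟩
      · obtain ⟨i, hi⟩ := cover g hgR
        exact ⟨i, (hmemX' i g).2 (Or.inl hi)⟩
    have notR' : ∀ i g, g ∈ X' i → g ∉ R' := by
      intro i g hgi hgR'
      rcases (hmemX' i g).1 hgi with h1 | h1
      · exact notR i g h1 (hR'sub hgR')
      · exact (Finset.mem_filter.1 hgR').2 i h1
    have nw' : ∀ i g, g ∈ X' i → 0 < I.v i g := by
      intro i g hgi
      rcases (hmemX' i g).1 hgi with h1 | h1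
      · exact nw i g h1
      · exact (p2 i g h1).2
    have inv' : ∀ i j, i ≠ j → ∃ ω c : ℝ, 0 ≤ c ∧
       (∑ g ∈ X' j, I.v i g) + c ≤ (∑ g ∈ X' i, I.v i g) + ω ∧
       ((ω = 0 ∧ c = 0) ∨ ∃ gs, gs ∈ X' j ∧ ¬ I.divisible i gs ∧ 0 < I.v i gs ∧
          ω = I.v i gs ∧ ∀ h ∈ R', I.v i h ≤ c) := by
      intro i j hij
      obtain ⟨ω, c, hc, hsum, hcase⟩ := inv i j hij
      have hXjsub : ∀ gs, gs ∈ X j → gs ∈ X' j := fun gs h => (hmemX' j gs).2 (Or.inl h)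
      have hΔi : (0:ℝ) ≤ W i i := hWnonneg i i
      rcases hπj : π j with _ | gj
      · -- j picked nothing
        refine ⟨ω, c, hc, ?_, ?_⟩
        · rw [hsumX' i j, hsumX' i i, hWnone i j hπj]
          linarith
        · rcases hcase with h | ⟨gs, hgs, hnd, hp, hωeq, hdom⟩
          · exact Or.inl h
          · exact Or.inr ⟨gs, hXjsub gs hgs, hnd, hp, hωeq, fun h hh => hdom h (hR'sub hh)⟩
      · -- j picked gj
        have hgjR : gj ∈ R := (p2 j gj hπj).1
        have hgjX' : gj ∈ X' j := (hmemX' j gj).2 (Or.inr hπj)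
        by_cases hz : I.v i gj = 0
        · refine ⟨ω, c, hc, ?_, ?_⟩
          · rw [hsumX' i j, hsumX' i i, hWsome i j gj hπj, hz]
            linarith
          · rcases hcase with h | ⟨gs, hgs, hnd, hp, hωeq, hdom⟩
            · exact Or.inl h
            · exact Or.inr ⟨gs, hXjsub gs hgs, hnd, hp, hωeq, fun h hh => hdom h (hR'sub hh)⟩
        have hvpos : 0 < I.v i gj := lt_of_le_of_ne (I.v_nonneg i gj) (Ne.symm hz)
        rcases p5 i (Finset.mem_univ i) j (Finset.mem_univ j) hij gj hπj with
          ⟨gi, hπi, hle⟩ | hndiv | hz'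
        · -- i picked something at least as valuable
          refine ⟨ω, c, hc, ?_, ?_⟩
          · rw [hsumX' i j, hsumX' i i, hWsome i j gj hπj, hWsome i i gi hπi]
            linarith
          · rcases hcase with h | ⟨gs, hgs, hnd, hp, hωeq, hdom⟩
            · exact Or.inl h
            · exact Or.inr ⟨gs, hXjsub gs hgs, hnd, hp, hωeq, fun h hh => hdom h (hR'sub hh)⟩
        · -- gj is indivisible for i
          have hdom' : ∀ h ∈ R', I.v i h ≤ W i i := by
            intro h hh
            have hh' := Finset.mem_filter.1 hh
            have := p4 i (Finset.mem_univ i) h hh'.1 hh'.2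
            rcases hπi : π i with _ | gi
            · rw [hWnone i i hπi, this.2 hπi]
            · rw [hWsome i i gi hπi]; exact this.1 gi hπi
          rcases hcase with ⟨hω0, hc0⟩ | ⟨gs, hgs, hnd, hp, hωeq, hdom⟩
          · -- first omitted good: gj becomes the witness
            refine ⟨I.v i gj, W i i, hΔi, ?_, ?_⟩
            · rw [hsumX' i j, hsumX' i i, hWsome i j gj hπj]
              rw [hω0, hc0] at hsum
              linarith
            · exact Or.inr ⟨gj, hgjX', hndiv, hvpos, rfl, hdom'⟩
          · -- credit covers gj; new credit from i's pick
            refine ⟨ω, W i i, hΔi, ?_, ?_⟩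
            · rw [hsumX' i j, hsumX' i i, hWsome i j gj hπj]
              have hgjc : I.v i gj ≤ c := hdom gj hgjR
              linarith
            · exact Or.inr ⟨gs, hXjsub gs hgs, hnd, hp, hωeq, hdom'⟩
        · exact absurd hz' hz
    exact ih R' hR'ss X' disj' cover' notR' nw' inv'

end FairDivision

/-- If every good is regarded as divisible by at most one agent (and every good
is positively valued by some agent, and every good an agent regards as divisible is positively
valued by that agent), then there is an integral complete allocation that is both EF1M and
non-wasteful. -/
theorem ef1m_nonwasteful_integral_exists (n m : ℕ) (I : FairDivision n m)
    (hpos : ∀ g, ∃ i, 0 < I.v i g)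
    (hdiv : ∀ i g, I.divisible i g → 0 < I.v i g)
    (honediv : ∀ g (i i' : Fin n), I.divisible i g → I.divisible i' g → i = i') :
    ∃ x, I.IsAllocation x ∧ (∀ i g, x i g = 0 ∨ x i g = 1) ∧
      I.EF1M x ∧ I.NonWasteful x := by
  classical
  obtain ⟨Y, hYuniq, hYpos, hYpair⟩ :=
    I.core hpos honediv Finset.univ (fun _ => ∅)
      (by simp) (by simp) (by simp) (by simp)
      (fun i j hij => ⟨0, 0, le_refl 0, by simp, Or.inl ⟨rfl, rfl⟩⟩)
  set x : Fin n → Fin m → ℝ := fun i g => if g ∈ Y i then 1 else 0 with hx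
  have hx01 : ∀ i g, x i g = 0 ∨ x i g = 1 := by
    intro i g
    by_cases h : g ∈ Y i <;> simp [hx, h]
  have hxmem : ∀ i g, 0 < x i g ↔ g ∈ Y i := by
    intro i g
    by_cases h : g ∈ Y i <;> simp [hx, h]
  -- utilities are plain sums over bundles
  have hfr1 : ∀ i g, I.frUtil i g 1 = I.v i g := by
    intro i g
    simp [FairDivision.frUtil]
  have hfr0 : ∀ i g, I.frUtil i g 0 = 0 := by
    intro i g
    simp [FairDivision.frUtil]
  have hfr : ∀ i j g, I.frUtil i g (x j g) = if g ∈ Y j then I.v i g else 0 := by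
    intro i j g
    by_cases h : g ∈ Y j <;> simp [hx, h, hfr1, hfr0]
  have hutil : ∀ i j, I.util i (x j) = ∑ g ∈ Y j, I.v i g := by
    intro i j
    unfold FairDivision.util
    rw [Finset.sum_congr rfl (fun g _ => hfr i j g)]
    rw [Finset.sum_ite_mem]
    congr 1
    exact Finset.univ_inter (Y j)
  have hutilMinus : ∀ i j gs, gs ∈ Y j →
      I.utilMinus i (x j) gs = (∑ g ∈ Y j, I.v i g) - I.v i gs := by
    intro i j gs hgs
    unfold FairDivision.utilMinus
    rw [Finset.sum_congr rfl (fun g _ => hfr i j g)]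
    have h1 : ∑ g' ∈ Finset.univ.erase gs, (if g' ∈ Y j then I.v i g' else 0)
        = ∑ g' ∈ (Y j).erase gs, I.v i g' := by
      rw [Finset.sum_ite_mem]
      congr 1
      ext a
      simp [Finset.mem_erase, Finset.mem_inter, and_comm]
    rw [h1, Finset.sum_erase_eq_sub hgs]
  refine ⟨x, ⟨⟨fun i g => ?_, fun g => ?_⟩, hx01, fun i j => ?_, fun i g hpos' => ?_⟩⟩
  · rcases hx01 i g with h | h <;> rw [h] <;> norm_num
  · obtain ⟨i₀, hi₀, huniq⟩ := hYuniq g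
    have : ∀ i : Fin n, x i g = if i = i₀ then 1 else 0 := by
      intro i
      by_cases h : i = i₀
      · subst h; simp [hx, hi₀]
      · have : g ∉ Y i := fun hmem => h (huniq i hmem)
        simp [hx, this, h]
    rw [Finset.sum_congr rfl (fun i _ => this i)]
    simp
  · -- EF1M
    by_cases hij : i = j
    · subst hij
      constructor
      · rintro ⟨g, hg, hnd, hp⟩
        refine ⟨g, hg, hnd, hp, ?_⟩
        rw [hutil i i, hutilMinus i i g ((hxmem i g).1 hg)]
        have := I.v_nonneg i g
        linarith
      · intro _
        exact le_refl (I.util i (x i))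
    · constructor
      · rintro ⟨g, hg, hnd, hp⟩
        rcases hYpair i j hij with hle | ⟨gs, hgs, hnds, hps, hbound⟩
        · refine ⟨g, hg, hnd, hp, ?_⟩
          rw [hutil i i, hutilMinus i j g ((hxmem j g).1 hg)]
          have := I.v_nonneg i g
          linarith
        · refine ⟨gs, (hxmem j gs).2 hgs, hnds, hps, ?_⟩
          rw [hutil i i, hutilMinus i j gs hgs]
          linarith
      · intro hno
        rcases hYpair i j hij with hle | ⟨gs, hgs, hnds, hps, hbound⟩
        · rw [hutil i j, hutil i i]; exact hle
        · exact absurd ⟨gs, (hxmem j gs).2 hgs, hnds, hps⟩ hno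
  · -- NonWasteful
    have hg : g ∈ Y i := (hxmem i g).1 hpos'
    have hx1 : x i g = 1 := by simp [hx, hg]
    rw [hx1, hfr1]
    exact hYpos i g hg
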